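/- arXiv:1702.00765 — 4 statements merged into one kernel-verified Lean document; each statement's English description precedes it below -/
import Mathlib

section
/- Assume in addition that S_λ is injective. Then the condition (i) ‖S_λ e_u‖ = ‖S_λ e_v‖ for all u, v ∈ V with |u| = |v| is equivalent to the condition (iii) ‖S_λⁿ e_u‖ = ‖S_λⁿ e_v‖ for every n ∈ ℕ and all u, v ∈ V with par(u) = par(v). -/
open Filter Finset Classical

set_option linter.unusedVariables false
open scoped ComplexConjugate ENNReal

noncomputable section
attribute [local instance] Classical.propDecidable

/-- A countably infinite rooted directed tree, encoded by the parent function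
(with the convention `par root = root`) and the depth function `|·|`. -/
structure DirTree (V : Type*) where
  root : V
  par : V → V
  depth : V → ℕ
  par_root : par root = root
  depth_eq_zero : ∀ v, depth v = 0 ↔ v = root
  depth_par : ∀ v, v ≠ root → depth (par v) + 1 = depth v

variable {V : Type*}

/-- The tree is leafless: every vertex has a child. -/
def DirTree.Leafless (T : DirTree V) : Prop :=
  ∀ u : V, ∃ v : V, v ≠ T.root ∧ T.par v = u

/-- `wProd T lam v k = λ_{par^k(v)|v}`, the product of the weights along `k` steps up from `v`. -/
def wProd (T : DirTree V) (lam : V → ℂ) (v : V) (k : ℕ) : ℂ :=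
  ∏ n ∈ Finset.range k, lam (T.par^[n] v)

/-- `(Γ_φ f)(v) = ∑_{k=0}^{|v|} λ_{par^k(v)|v} φ(k) f(par^k(v))`. -/
def Gamma (T : DirTree V) (lam : V → ℂ) (φ : ℕ → ℂ) (f : V → ℂ) (v : V) : ℂ :=
  ∑ k ∈ Finset.range (T.depth v + 1), wProd T lam v k * φ k * f (T.par^[k] v)

/-- `S` is the weighted shift `S_λ` on `ℓ²(V)`. -/
def IsShift (T : DirTree V) (lam : V → ℝ)
    (S : lp (fun _ : V => ℂ) 2 →L[ℂ] lp (fun _ : V => ℂ) 2) : Prop :=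
  ∀ f : lp (fun _ : V => ℂ) 2, ∀ v : V,
    S f v = if v = T.root then 0 else (lam v : ℂ) * f (T.par v)

/-- `M` is the (bounded, everywhere defined) multiplication operator `M_φ` with symbol `φ`;
the existence of such an `M` is equivalent to `φ ∈ 𝓜(λ)`. -/
def IsMultOp (T : DirTree V) (lam : V → ℝ) (φ : ℕ → ℂ)
    (M : lp (fun _ : V => ℂ) 2 →L[ℂ] lp (fun _ : V => ℂ) 2) : Prop :=
  ∀ f : lp (fun _ : V => ℂ) 2, ∀ v : V,
    M f v = Gamma T (fun u => (lam u : ℂ)) φ (⇑f) v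

/-! The `n`-th power of the shift acts as `(Sⁿ f)(v) = (Sⁿ e_{parⁿ v})(v) · f(parⁿ v)`, so that
`‖Sⁿ⁺¹ e_u‖² = ∑_w |(S e_u)(w)|² ‖Sⁿ e_w‖²`, where only the children `w` of `u` contribute. When
`‖Sⁿ e_w‖` takes the same value `C` on all children, this reads `‖Sⁿ⁺¹ e_u‖ = C ‖S e_u‖`.

(i) ⇒ (iii): by induction on `n`, `‖Sⁿ e_u‖` depends only on `|u|`, and siblings have equal depth.
(iii) ⇒ (i): by induction on the depth, `‖Sⁿ e_u‖ = ‖Sⁿ e_v‖` for all `n` when `|u| = |v|`. For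
`u, v` of depth `m + 1`, the factorization at `par u` and `par v` gives
`‖Sⁿ⁺¹ e_u‖ ‖S e_{par u}‖ = ‖Sⁿ⁺¹ e_v‖ ‖S e_{par v}‖`, and the common factor
`‖S e_{par u}‖ = ‖S e_{par v}‖` is nonzero because `S` is injective. -/

namespace lp

variable {ι : Type*}

theorem enorm_sq_eq_tsum {E : ι → Type*} [∀ i, NormedAddCommGroup (E i)] (f : lp E 2) :
    ‖f‖ₑ ^ 2 = ∑' i, ‖f i‖ₑ ^ 2 := by
  have h := lp.hasSum_norm (p := 2) (by norm_num) f
  simp only [ENNReal.toReal_ofNat, Real.rpow_two] at h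
  simp only [← ofReal_norm, ← ENNReal.ofReal_pow (norm_nonneg _)]
  rw [← h.tsum_eq, ENNReal.ofReal_tsum_of_nonneg (fun i => by positivity) h.summable]

theorem enorm_sq_apply_eq_tsum_of_apply_eq_mul {𝕜 : Type*} [NormedDivisionRing 𝕜]
    (A : lp (fun _ : ι => 𝕜) 2 → lp (fun _ : ι => 𝕜) 2) (π : ι → ι)
    (hA : ∀ f i, A f i = A (lp.single 2 (π i) 1) i * f (π i)) (f : lp (fun _ : ι => 𝕜) 2) :
    ‖A f‖ₑ ^ 2 = ∑' j, ‖f j‖ₑ ^ 2 * ‖A (lp.single 2 j 1)‖ₑ ^ 2 := by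
  have hsupp : ∀ i j, π i ≠ j → A (lp.single 2 j 1) i = 0 := fun i j hij => by
    rw [hA, lp.single_apply_ne 2 j _ hij, mul_zero]
  calc ‖A f‖ₑ ^ 2
      = ∑' i, ∑' j, ‖f j‖ₑ ^ 2 * ‖A (lp.single 2 j 1) i‖ₑ ^ 2 := by
        rw [enorm_sq_eq_tsum]
        refine tsum_congr fun i => ?_
        rw [tsum_eq_single (π i) fun j hj => by rw [hsupp i j (Ne.symm hj), enorm_zero,
          zero_pow two_ne_zero, mul_zero], hA, enorm_mul, mul_pow, mul_comm]
    _ = ∑' j, ‖f j‖ₑ ^ 2 * ‖A (lp.single 2 j 1)‖ₑ ^ 2 := by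
        rw [ENNReal.tsum_comm]
        simp only [ENNReal.tsum_mul_left, ← enorm_sq_eq_tsum]

end lp

theorem DirTree.depth_eq_of_par_eq (T : DirTree V) {u v : V} (hu : u ≠ T.root) (hv : v ≠ T.root)
    (h : T.par u = T.par v) : T.depth u = T.depth v := by
  rw [← T.depth_par u hu, ← T.depth_par v hv, h]

def DirTree.IsBalanced (T : DirTree V) (S : lp (fun _ : V => ℂ) 2 →L[ℂ] lp (fun _ : V => ℂ) 2) :
    Prop :=
  ∀ u v : V, T.depth u = T.depth v →
    ‖S (lp.single 2 u (1:ℂ))‖ = ‖S (lp.single 2 v (1:ℂ))‖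

def DirTree.IsLocallyPowerBalanced (T : DirTree V)
    (S : lp (fun _ : V => ℂ) 2 →L[ℂ] lp (fun _ : V => ℂ) 2) : Prop :=
  ∀ n : ℕ, 1 ≤ n → ∀ u v : V, u ≠ T.root → v ≠ T.root → T.par u = T.par v →
    ‖(S ^ n) (lp.single 2 u (1:ℂ))‖ = ‖(S ^ n) (lp.single 2 v (1:ℂ))‖

namespace IsShift

variable {T : DirTree V} {lam : V → ℝ} {S : lp (fun _ : V => ℂ) 2 →L[ℂ] lp (fun _ : V => ℂ) 2}

local notation "e" => lp.single (E := fun _ : V => ℂ) 2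

theorem apply_single_ne_zero (hS : IsShift T lam S) {u w : V} (h : S (e u 1) w ≠ 0) :
    w ≠ T.root ∧ T.par w = u := by
  rw [hS] at h
  by_contra hw
  refine h ?_
  split_ifs with hroot
  · rfl
  · rw [lp.single_apply_ne 2 u _ fun hpar => hw ⟨hroot, hpar⟩, mul_zero]

theorem pow_apply (hS : IsShift T lam S) (n : ℕ) (f : lp (fun _ : V => ℂ) 2) (v : V) :
    (S ^ n) f v = (S ^ n) (e (T.par^[n] v) 1) v * f (T.par^[n] v) := by
  induction n generalizing v with
  | zero => simp
  | succ n ih =>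
    simp only [pow_succ', mul_apply_eq_comp, hS _ v, Function.iterate_succ_apply, ih (T.par v)]
    split_ifs <;> ring

theorem enorm_sq_pow_apply (hS : IsShift T lam S) (n : ℕ) (f : lp (fun _ : V => ℂ) 2) :
    ‖(S ^ n) f‖ₑ ^ 2 = ∑' w, ‖f w‖ₑ ^ 2 * ‖(S ^ n) (e w 1)‖ₑ ^ 2 :=
  lp.enorm_sq_apply_eq_tsum_of_apply_eq_mul _ _ (hS.pow_apply n) f

theorem enorm_pow_succ_single (hS : IsShift T lam S) {n : ℕ} {u : V} {C : ℝ≥0∞}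
    (hC : ∀ w, S (e u 1) w ≠ 0 → ‖(S ^ n) (e w 1)‖ₑ = C) :
    ‖(S ^ (n + 1)) (e u 1)‖ₑ = C * ‖S (e u 1)‖ₑ := by
  refine (ENNReal.pow_right_strictMono two_ne_zero).injective ?_
  calc ‖(S ^ (n + 1)) (e u 1)‖ₑ ^ 2
      = ∑' w, ‖S (e u 1) w‖ₑ ^ 2 * ‖(S ^ n) (e w 1)‖ₑ ^ 2 := by
        rw [pow_succ S n, mul_apply_eq_comp, hS.enorm_sq_pow_apply]
    _ = ∑' w, C ^ 2 * ‖S (e u 1) w‖ₑ ^ 2 := by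
        refine tsum_congr fun w => ?_
        by_cases hw : S (e u 1) w = 0
        · simp [hw]
        · rw [hC w hw, mul_comm]
    _ = (C * ‖S (e u 1)‖ₑ) ^ 2 := by
        rw [ENNReal.tsum_mul_left, ← lp.enorm_sq_eq_tsum, mul_pow]

theorem depth_eq_of_apply_single_ne_zero (hS : IsShift T lam S) {u w : V}
    (h : S (e u 1) w ≠ 0) : T.depth w = T.depth u + 1 := by
  obtain ⟨hw, rfl⟩ := hS.apply_single_ne_zero h
  exact (T.depth_par w hw).symm

theorem enorm_pow_single_eq_of_isBalanced (hS : IsShift T lam S) (hbal : T.IsBalanced S)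
    (n : ℕ) {u v : V} (huv : T.depth u = T.depth v) :
    ‖(S ^ n) (e u 1)‖ₑ = ‖(S ^ n) (e v 1)‖ₑ := by
  induction n generalizing u v with
  | zero => simp only [pow_zero, one_apply_eq_self, enorm_eq_iff_norm_eq, lp.norm_single two_pos]
  | succ n ih =>
    obtain ⟨C, hC⟩ : ∃ C, ∀ w, T.depth w = T.depth u + 1 → ‖(S ^ n) (e w 1)‖ₑ = C := by
      by_cases h : ∃ w₀, T.depth w₀ = T.depth u + 1
      · obtain ⟨w₀, hw₀⟩ := h
        exact ⟨_, fun w hw => ih (hw.trans hw₀.symm)⟩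
      · exact ⟨0, fun w hw => absurd ⟨w, hw⟩ h⟩
    rw [hS.enorm_pow_succ_single fun w hw => hC w (hS.depth_eq_of_apply_single_ne_zero hw),
      hS.enorm_pow_succ_single fun w hw => hC w (huv ▸ hS.depth_eq_of_apply_single_ne_zero hw),
      enorm_eq_iff_norm_eq.2 (hbal u v huv)]

theorem isLocallyPowerBalanced_of_isBalanced (hS : IsShift T lam S) (hbal : T.IsBalanced S) :
    T.IsLocallyPowerBalanced S := fun n _ u v hu hv huv =>
  enorm_eq_iff_norm_eq.1 <|
    hS.enorm_pow_single_eq_of_isBalanced hbal n (T.depth_eq_of_par_eq hu hv huv)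

theorem enorm_pow_single_eq_of_isLocallyPowerBalanced (hS : IsShift T lam S)
    (hinj : Function.Injective S) (hloc : T.IsLocallyPowerBalanced S) {u v : V}
    (huv : T.depth u = T.depth v) (n : ℕ) : ‖(S ^ n) (e u 1)‖ₑ = ‖(S ^ n) (e v 1)‖ₑ := by
  obtain ⟨m, hu⟩ : ∃ m, T.depth u = m := ⟨_, rfl⟩
  induction m generalizing n u v with
  | zero => rw [(T.depth_eq_zero u).1 hu, (T.depth_eq_zero v).1 (huv ▸ hu)]
  | succ m ih =>
    cases n with
    | zero => simp only [pow_zero, one_apply_eq_self, enorm_eq_iff_norm_eq, lp.norm_single two_pos]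
    | succ n =>
      have hv : T.depth v = m + 1 := huv ▸ hu
      have hroot {x : V} (hx : T.depth x = m + 1) : x ≠ T.root := fun h => by
        simp [h, (T.depth_eq_zero T.root).2 rfl] at hx
      have hpar {x : V} (hx : T.depth x = m + 1) : T.depth (T.par x) = m := by
        have := T.depth_par x (hroot hx); omega
      have hfactor {x : V} (hx : T.depth x = m + 1) :
          ‖(S ^ (n + 1 + 1)) (e (T.par x) 1)‖ₑ = ‖(S ^ (n + 1)) (e x 1)‖ₑ * ‖S (e (T.par x) 1)‖ₑ :=
        hS.enorm_pow_succ_single fun w hw =>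
          have hw' := hS.apply_single_ne_zero hw
          enorm_eq_iff_norm_eq.2 (hloc (n + 1) le_add_self w x hw'.1 (hroot hx) hw'.2)
      have hpow := ih ((hpar hu).trans (hpar hv).symm) (n + 1 + 1) (hpar hu)
      have hone : ‖S (e (T.par u) 1)‖ₑ = ‖S (e (T.par v) 1)‖ₑ := by
        simpa only [pow_one] using ih ((hpar hu).trans (hpar hv).symm) 1 (hpar hu)
      have hne : S (e (T.par v) 1) ≠ 0 :=
        (hinj.ne_iff' (map_zero S)).2 (ne_of_apply_ne (fun f => f (T.par v)) (by simp))
      rw [hfactor hu, hfactor hv, hone] at hpow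
      exact (ENNReal.mul_left_inj (enorm_ne_zero.2 hne) enorm_ne_top).1 hpow

theorem isBalanced_of_isLocallyPowerBalanced (hS : IsShift T lam S)
    (hinj : Function.Injective S) (hloc : T.IsLocallyPowerBalanced S) : T.IsBalanced S :=
  fun u v huv => enorm_eq_iff_norm_eq.1 <| by
    simpa only [pow_one] using hS.enorm_pow_single_eq_of_isLocallyPowerBalanced hinj hloc huv 1

end IsShift

theorem stmt15_general (T : DirTree V) (lam : V → ℝ)
    (S : lp (fun _ : V => ℂ) 2 →L[ℂ] lp (fun _ : V => ℂ) 2) (hS : IsShift T lam S)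
    (hinj : Function.Injective S) :
    (∀ u v : V, T.depth u = T.depth v →
        ‖S (lp.single 2 u (1:ℂ))‖ = ‖S (lp.single 2 v (1:ℂ))‖) ↔
      (∀ n : ℕ, 1 ≤ n → ∀ u v : V, u ≠ T.root → v ≠ T.root → T.par u = T.par v →
        ‖(S ^ n) (lp.single 2 u (1:ℂ))‖ = ‖(S ^ n) (lp.single 2 v (1:ℂ))‖) :=
  ⟨hS.isLocallyPowerBalanced_of_isBalanced, hS.isBalanced_of_isLocallyPowerBalanced hinj⟩

/-- Lemma, (i) ⇔ (iii) under injectivity: if `S_λ` is injective, then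
`S_λ` is balanced iff it is locally power balanced: `‖S_λⁿ e_u‖ = ‖S_λⁿ e_v‖` for every
`n ∈ ℕ` and all `u, v ∈ V°` with `par u = par v`. -/
theorem stmt15 [Countable V] [Infinite V] (T : DirTree V) (lam : V → ℝ)
    (hlam : ∀ v, v ≠ T.root → 0 < lam v)
    (S : lp (fun _ : V => ℂ) 2 →L[ℂ] lp (fun _ : V => ℂ) 2) (hS : IsShift T lam S)
    (hinj : Function.Injective S) :
    (∀ u v : V, T.depth u = T.depth v →
        ‖S (lp.single 2 u (1:ℂ))‖ = ‖S (lp.single 2 v (1:ℂ))‖) ↔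
      (∀ n : ℕ, 1 ≤ n → ∀ u v : V, u ≠ T.root → v ≠ T.root → T.par u = T.par v →
        ‖(S ^ n) (lp.single 2 u (1:ℂ))‖ = ‖(S ^ n) (lp.single 2 v (1:ℂ))‖) :=
  stmt15_general T lam S hS hinj
end
end

section
/- The Hilbert space ℓ²(V) decomposes as the orthogonal sum ℓ²(V) = ker S_λ* ⊕ ⋁_{n=1}^∞ S_λⁿ(ker S_λ*), where ⋁ denotes the closed linear span. -/
open Filter Finset Classical

set_option linter.unusedVariables false
open scoped ComplexConjugate ENNReal

noncomputable section
attribute [local instance] Classical.propDecidable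

variable {V : Type*}

/-! Each `Sⁿ⁺¹(ker S*)` lies in `ran S`, which is orthogonal to `ker S*`. For the decomposition it
suffices that nothing nonzero is orthogonal to both summands, i.e. that every basis vector `e_v`
lies in the algebraic span of `⋃ₙ Sⁿ(ker S*)`. This follows by induction on `|v|`:
`e_root ∈ ker S*`, and for a child `w` of `u` the vector `e_w - (λ_w / ‖S e_u‖²) • S e_u` lies in
`ker S*`, since `S* e_w = λ_w e_u` and, distinct vertices having disjoint sets of children,
`S* S e_u = ‖S e_u‖² e_u`. -/

open scoped InnerProduct InnerProductSpace lp

namespace Submodule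

variable {𝕜 E : Type*} [RCLike 𝕜] [NormedAddCommGroup E] [InnerProductSpace 𝕜 E]

theorem sup_eq_top_of_le_orthogonal {K C : Submodule 𝕜 E} [K.HasOrthogonalProjection]
    [C.HasOrthogonalProjection] (hC : C ≤ Kᗮ) (h : (K ⊔ C)ᗮ = ⊥) : K ⊔ C = ⊤ := by
  have hCK : C = Kᗮ := by
    simpa [inf_orthogonal, sup_comm, h] using sup_orthogonal_inf_of_hasOrthogonalProjection hC
  rw [hCK, sup_orthogonal_of_hasOrthogonalProjection]

end Submodule

theorem Submodule.map_sup_iSup_map_pow_succ_le {R M : Type*} [Semiring R] [AddCommMonoid M]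
    [Module R M] (f : M →ₗ[R] M) (K : Submodule R M) :
    (K ⊔ ⨆ n : ℕ, K.map (f ^ (n + 1))).map f ≤ K ⊔ ⨆ n : ℕ, K.map (f ^ (n + 1)) := by
  rw [map_sup, map_iSup]
  refine sup_le (le_sup_of_le_right (le_iSup_of_le 0 (by simp))) (iSup_le fun n => ?_)
  rw [← map_comp, ← Module.End.mul_eq_comp, ← pow_succ']
  exact le_sup_of_le_right (le_iSup_of_le (n + 1) le_rfl)

theorem ContinuousLinearMap.range_le_orthogonal_ker_adjoint {𝕜 E F : Type*} [RCLike 𝕜]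
    [NormedAddCommGroup E] [NormedAddCommGroup F] [InnerProductSpace 𝕜 E]
    [InnerProductSpace 𝕜 F] [CompleteSpace E] [CompleteSpace F] (T : E →L[𝕜] F) :
    T.range ≤ T†.kerᗮ := by
  rw [← orthogonal_range]
  exact Submodule.le_orthogonal_orthogonal _

namespace lp

variable {𝕜 ι : Type*} [RCLike 𝕜] [DecidableEq ι]

theorem adjoint_apply_eq_inner_single
    (A : ℓ²(ι, 𝕜) →L[𝕜] ℓ²(ι, 𝕜)) (f : ℓ²(ι, 𝕜)) (i : ι) :
    (A†) f i = ⟪A (lp.single 2 i 1), f⟫_𝕜 := by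
  rw [← ContinuousLinearMap.adjoint_inner_right, inner_single_left]
  simp

theorem orthogonal_eq_bot_of_single_mem {M : Submodule 𝕜 (ℓ²(ι, 𝕜))}
    (hM : ∀ i, lp.single 2 i 1 ∈ M) : Mᗮ = ⊥ := by
  refine (Submodule.eq_bot_iff _).2 fun f hf => lp.ext (funext fun i => ?_)
  simpa [inner_single_left] using Submodule.inner_right_of_mem_orthogonal (hM i) hf

end lp

namespace IsShift

local notation "𝐞 " v:max => (lp.single 2 v (1 : ℂ) : ℓ²(V, ℂ))

variable {T : DirTree V} {lam : V → ℝ} {S : ℓ²(V, ℂ) →L[ℂ] ℓ²(V, ℂ)}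

theorem adjoint_single (hS : IsShift T lam S) (w : V) :
    (S†) (𝐞 w) = if w = T.root then 0 else (lam w : ℂ) • 𝐞 (T.par w) := by
  ext x
  rw [lp.adjoint_apply_eq_inner_single, lp.inner_single_right, hS]
  split_ifs with hw
  · simp
  rw [lp.coeFn_smul, Pi.smul_apply, lp.single_apply, lp.single_apply]
  by_cases hx : x = T.par w
  · simp [hx]
  · simp [hx, Ne.symm hx]

theorem inner_apply_single_apply_single_of_ne (hS : IsShift T lam S) {u v : V} (huv : u ≠ v) :
    ⟪S (𝐞 u), S (𝐞 v)⟫_ℂ = 0 := by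
  rw [lp.inner_eq_tsum]
  refine (tsum_congr fun w => ?_).trans tsum_zero
  rw [hS, hS]
  split_ifs with hw
  · simp
  by_cases hu : T.par w = u
  · simp [lp.single_apply, hu, huv]
  · simp [lp.single_apply, Pi.single_apply, hu]

theorem adjoint_apply_single (hS : IsShift T lam S) (u : V) :
    (S†) (S (𝐞 u)) = ((‖S (𝐞 u)‖ ^ 2 : ℝ) : ℂ) • 𝐞 u := by
  ext x
  rw [lp.adjoint_apply_eq_inner_single]
  by_cases hx : x = u
  · subst hx
    simp [inner_self_eq_norm_sq_to_K]
  · simp [hS.inner_apply_single_apply_single_of_ne hx, lp.single_apply, hx]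

theorem single_sub_smul_mem_ker_adjoint (hS : IsShift T lam S) {w : V} (hw : w ≠ T.root)
    (hlw : lam w ≠ 0) :
    𝐞 w - ((lam w : ℂ) / ((‖S (𝐞 (T.par w))‖ ^ 2 : ℝ) : ℂ)) • S (𝐞 (T.par w)) ∈
      (S†).ker := by
  have hSw : S (𝐞 (T.par w)) ≠ 0 := fun h0 => by
    have h := congrArg (fun f : ℓ²(V, ℂ) => f w) h0
    rw [hS, if_neg hw, lp.single_apply_self, mul_one] at h
    exact hlw (Complex.ofReal_eq_zero.1 h)
  rw [LinearMap.mem_ker, map_sub, map_smul, ContinuousLinearMap.coe_coe, hS.adjoint_apply_single,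
    hS.adjoint_single, if_neg hw, smul_smul, div_mul_cancel₀ _ (by simpa using hSw), sub_self]

theorem single_mem_of_ker_adjoint_le (hS : IsShift T lam S)
    (hlam : ∀ v, v ≠ T.root → lam v ≠ 0) {M : Submodule ℂ ℓ²(V, ℂ)} (hK : (S†).ker ≤ M)
    (hM : M.map S.toLinearMap ≤ M) (v : V) : 𝐞 v ∈ M := by
  induction hd : T.depth v generalizing v with
  | zero =>
    rw [(T.depth_eq_zero v).1 hd]
    exact hK (by simp [hS.adjoint_single])
  | succ n ih =>
    have hv : v ≠ T.root := by
      rintro rfl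
      simp [(T.depth_eq_zero T.root).2 rfl] at hd
    have hpar : 𝐞 (T.par v) ∈ M := ih _ (by have := T.depth_par v hv; omega)
    convert M.add_mem (hK (hS.single_sub_smul_mem_ker_adjoint hv (hlam v hv)))
      (M.smul_mem _ (hM ⟨_, hpar, rfl⟩)) using 1
    exact (sub_add_cancel (𝐞 v) _).symm

end IsShift

theorem stmt16_general (T : DirTree V) (lam : V → ℝ)
    (hlam : ∀ v, v ≠ T.root → 0 < lam v)
    (S : lp (fun _ : V => ℂ) 2 →L[ℂ] lp (fun _ : V => ℂ) 2) (hS : IsShift T lam S) :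
    (∀ g ∈ LinearMap.ker ((ContinuousLinearMap.adjoint S : lp (fun _ : V => ℂ) 2 →ₗ[ℂ] lp (fun _ : V => ℂ) 2)),
      ∀ h ∈ (⨆ n : ℕ, Submodule.map ((S ^ (n + 1) : lp (fun _ : V => ℂ) 2 →ₗ[ℂ] lp (fun _ : V => ℂ) 2))
          (LinearMap.ker ((ContinuousLinearMap.adjoint S : lp (fun _ : V => ℂ) 2 →ₗ[ℂ] lp (fun _ : V => ℂ) 2)))).topologicalClosure,
        (inner ℂ g h : ℂ) = 0) ∧
    LinearMap.ker ((ContinuousLinearMap.adjoint S : lp (fun _ : V => ℂ) 2 →ₗ[ℂ] lp (fun _ : V => ℂ) 2)) ⊔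
      (⨆ n : ℕ, Submodule.map ((S ^ (n + 1) : lp (fun _ : V => ℂ) 2 →ₗ[ℂ] lp (fun _ : V => ℂ) 2))
          (LinearMap.ker ((ContinuousLinearMap.adjoint S : lp (fun _ : V => ℂ) 2 →ₗ[ℂ] lp (fun _ : V => ℂ) 2)))).topologicalClosure = ⊤ := by
  set K := (S†).ker
  set D := ⨆ n : ℕ, K.map (S.toLinearMap ^ (n + 1))
  have hDK : D.topologicalClosure ≤ Kᗮ := by
    refine D.topologicalClosure_minimal (iSup_le fun n => ?_) K.isClosed_orthogonal
    rw [pow_succ', Module.End.mul_eq_comp, Submodule.map_comp]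
    exact LinearMap.map_le_range.trans S.range_le_orthogonal_ker_adjoint
  have hspan : (K ⊔ D)ᗮ = ⊥ := lp.orthogonal_eq_bot_of_single_mem
    (hS.single_mem_of_ker_adjoint_le (fun v hv => (hlam v hv).ne') le_sup_left
      (Submodule.map_sup_iSup_map_pow_succ_le _ K))
  have : CompleteSpace K := (ContinuousLinearMap.isClosed_ker _).completeSpace_coe
  refine ⟨fun g hg h hh => Submodule.inner_right_of_mem_orthogonal hg (hDK hh), ?_⟩
  refine Submodule.sup_eq_top_of_le_orthogonal hDK ?_
  rw [← Submodule.inf_orthogonal, Submodule.orthogonal_closure, Submodule.inf_orthogonal, hspan]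

/-- Wold-type decomposition, Theorem (i):
`ℓ²(V) = ker S_λ* ⊕ ⋁_{n=1}^∞ S_λⁿ(ker S_λ*)`, an orthogonal decomposition. -/
theorem stmt16 [Countable V] [Infinite V] (T : DirTree V) (lam : V → ℝ)
    (hlam : ∀ v, v ≠ T.root → 0 < lam v)
    (S : lp (fun _ : V => ℂ) 2 →L[ℂ] lp (fun _ : V => ℂ) 2) (hS : IsShift T lam S) :
    (∀ g ∈ LinearMap.ker ((ContinuousLinearMap.adjoint S : lp (fun _ : V => ℂ) 2 →ₗ[ℂ] lp (fun _ : V => ℂ) 2)),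
      ∀ h ∈ (⨆ n : ℕ, Submodule.map ((S ^ (n + 1) : lp (fun _ : V => ℂ) 2 →ₗ[ℂ] lp (fun _ : V => ℂ) 2))
          (LinearMap.ker ((ContinuousLinearMap.adjoint S : lp (fun _ : V => ℂ) 2 →ₗ[ℂ] lp (fun _ : V => ℂ) 2)))).topologicalClosure,
        (inner ℂ g h : ℂ) = 0) ∧
    LinearMap.ker ((ContinuousLinearMap.adjoint S : lp (fun _ : V => ℂ) 2 →ₗ[ℂ] lp (fun _ : V => ℂ) 2)) ⊔
      (⨆ n : ℕ, Submodule.map ((S ^ (n + 1) : lp (fun _ : V => ℂ) 2 →ₗ[ℂ] lp (fun _ : V => ℂ) 2))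
          (LinearMap.ker ((ContinuousLinearMap.adjoint S : lp (fun _ : V => ℂ) 2 →ₗ[ℂ] lp (fun _ : V => ℂ) 2)))).topologicalClosure = ⊤ :=
  stmt16_general T lam hlam S hS
end
end

section
/- If S_λ is locally power balanced, i.e., ‖S_λⁿ e_u‖ = ‖S_λⁿ e_v‖ for every n ∈ ℕ and all u, v ∈ V with par(u) = par(v), then the subspaces S_λⁿ(ker S_λ*) and S_λᵐ(ker S_λ*) are mutually orthogonal for all n, m ∈ ℕ₀ with n ≠ m. -/
open Filter Finset Classical

set_option linter.unusedVariables false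
open scoped ComplexConjugate ENNReal

noncomputable section
attribute [local instance] Classical.propDecidable

variable {V : Type*}

/-! The vectors `S^m e_u` have pairwise disjoint supports (`S^m e_u` lives `m` generations below
`u`), so `(S^m)* S^m` is the diagonal operator with entries `c u = ‖S^m e_u‖²`. Local power
balance makes `c` constant on sets of siblings, hence `c • S y = S (d • y)` for a bounded `d`.
For `n < m` write `S^m x = S^n (S y)`; then for `f ∈ ker S*`,
`⟪S^m x, S^n f⟫ = ⟪(S^n)* S^n (S y), f⟫ = ⟪S (d • y), f⟫ = ⟪d • y, S* f⟫ = 0`.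
-/

open scoped InnerProductSpace

local notation "ℓ²(" V ")" => lp (fun _ : V => ℂ) 2

lemma lp.norm_map_single_le (A : ℓ²(V) →L[ℂ] ℓ²(V)) (u : V) :
    ‖A (lp.single 2 u 1)‖ ≤ ‖A‖ := by
  simpa [lp.norm_single] using A.le_opNorm (lp.single 2 u 1)

lemma lp.inner_map_single_map_of_pairwise_orthogonal (A : ℓ²(V) →L[ℂ] ℓ²(V))
    (hA : Pairwise fun u v => ⟪A (lp.single 2 u 1), A (lp.single 2 v 1)⟫_ℂ = 0)
    (x : ℓ²(V)) (v : V) :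
    ⟪A (lp.single 2 v 1), A x⟫_ℂ = (‖A (lp.single 2 v 1)‖ : ℂ) ^ 2 * x v := by
  have hsum := (lp.hasSum_single ENNReal.ofNat_ne_top x).mapL
    ((innerSL ℂ (A (lp.single 2 v 1))).comp A)
  have hterm : ∀ u, ⟪A (lp.single 2 v 1), A (lp.single 2 u (x u))⟫_ℂ
      = x u * ⟪A (lp.single 2 v 1), A (lp.single 2 u 1)⟫_ℂ := by
    intro u
    have : (lp.single 2 u (x u) : ℓ²(V)) = x u • lp.single 2 u 1 := by
      rw [← lp.single_smul, smul_eq_mul, mul_one]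
    rw [this, map_smul, inner_smul_right]
  simp only [ContinuousLinearMap.comp_apply, innerSL_apply_apply, hterm] at hsum
  have hoff : ∀ u ≠ v, x u * ⟪A (lp.single 2 v 1), A (lp.single 2 u 1)⟫_ℂ = 0 :=
    fun u huv => by rw [hA huv.symm, mul_zero]
  refine hsum.unique ?_
  simpa [inner_self_eq_norm_sq_to_K, mul_comm] using hasSum_single v hoff

lemma lp.adjoint_mul_self_apply_of_pairwise_orthogonal (A : ℓ²(V) →L[ℂ] ℓ²(V))
    (hA : Pairwise fun u v => ⟪A (lp.single 2 u 1), A (lp.single 2 v 1)⟫_ℂ = 0)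
    (x : ℓ²(V)) (v : V) :
    (ContinuousLinearMap.adjoint A * A) x v = (‖A (lp.single 2 v 1)‖ : ℂ) ^ 2 * x v := by
  rw [← lp.inner_map_single_map_of_pairwise_orthogonal A hA,
    ← ContinuousLinearMap.adjoint_inner_right, lp.inner_single_left, RCLike.inner_apply, map_one,
    mul_one, mul_apply_eq_comp]

lemma Memℓp.mul_of_norm_le {p : ℝ≥0∞} {d y : V → ℂ} {C : ℝ}
    (hd : ∀ w, ‖d w‖ ≤ C) (hy : Memℓp y p) : Memℓp (fun w => d w * y w) p :=
  hy.norm.const_mul C |>.mono fun w => by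
    rw [norm_mul]; exact mul_le_mul_of_nonneg_right (hd w) (norm_nonneg _)

namespace IsShift

variable {T : DirTree V} {lam : V → ℝ} {S : ℓ²(V) →L[ℂ] ℓ²(V)}

lemma iterate_par_eq_of_pow_single_apply_ne_zero (hS : IsShift T lam S) {m : ℕ} {u w : V}
    (h : (S ^ m) (lp.single 2 u 1) w ≠ 0) : T.par^[m] w = u := by
  induction m generalizing w with
  | zero => simpa [Pi.single_apply] using h
  | succ m ih =>
    rw [pow_succ', mul_apply_eq_comp, hS, ite_ne_left_iff] at h
    exact ih (right_ne_zero_of_mul h.2.symm)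

lemma pairwise_inner_pow_single_eq_zero (hS : IsShift T lam S) (m : ℕ) :
    Pairwise fun u v : V =>
      ⟪(S ^ m) (lp.single 2 u 1), (S ^ m) (lp.single 2 v 1)⟫_ℂ = 0 := by
  intro u v huv
  have hterm : ∀ w, ⟪(S ^ m) (lp.single 2 u 1) w, (S ^ m) (lp.single 2 v 1) w⟫_ℂ = 0 := by
    intro w
    by_cases hu : (S ^ m) (lp.single 2 u 1) w = 0
    · rw [hu, inner_zero_left]
    by_cases hv : (S ^ m) (lp.single 2 v 1) w = 0
    · rw [hv, inner_zero_right]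
    exact (huv ((hS.iterate_par_eq_of_pow_single_apply_ne_zero hu).symm.trans
      (hS.iterate_par_eq_of_pow_single_apply_ne_zero hv))).elim
  rw [lp.inner_eq_tsum, tsum_congr hterm, tsum_zero]

lemma exists_apply_eq_mul_apply (hS : IsShift T lam S) {c : V → ℂ} {C : ℝ}
    (hc : ∀ v, ‖c v‖ ≤ C)
    (hsib : ∀ u v, u ≠ T.root → v ≠ T.root → T.par u = T.par v → c u = c v)
    (y : ℓ²(V)) : ∃ z : ℓ²(V), ∀ v, S z v = c v * S y v := by
  let d : V → ℂ := fun w => if h : ∃ u, u ≠ T.root ∧ T.par u = w then c h.choose else 0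
  have hd : ∀ w, ‖d w‖ ≤ C := fun w => by
    unfold d
    split_ifs
    exacts [hc _, norm_zero (E := ℂ) ▸ (norm_nonneg _).trans (hc T.root)]
  refine ⟨⟨fun w => d w * y w, Memℓp.mul_of_norm_le hd (lp.memℓp y)⟩, fun v => ?_⟩
  rw [hS, hS]
  split_ifs with hv
  · rw [mul_zero]
  have hchild : ∃ u, u ≠ T.root ∧ T.par u = T.par v := ⟨v, hv, rfl⟩
  have hdv : d (T.par v) = c v := by
    obtain ⟨hu, hpar⟩ := hchild.choose_spec
    simp only [d, dif_pos hchild]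
    exact hsib _ _ hu hv hpar
  change (lam v : ℂ) * (d (T.par v) * y (T.par v)) = _
  rw [hdv]
  ring

lemma inner_map_apply_map_eq_zero_of_adjoint_eq_zero (hS : IsShift T lam S)
    (A : ℓ²(V) →L[ℂ] ℓ²(V))
    (hA : Pairwise fun u v => ⟪A (lp.single 2 u 1), A (lp.single 2 v 1)⟫_ℂ = 0)
    (hsib : ∀ u v, u ≠ T.root → v ≠ T.root → T.par u = T.par v →
      ‖A (lp.single 2 u 1)‖ = ‖A (lp.single 2 v 1)‖)
    (y : ℓ²(V)) {f : ℓ²(V)} (hf : ContinuousLinearMap.adjoint S f = 0) :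
    ⟪A (S y), A f⟫_ℂ = 0 := by
  obtain ⟨z, hz⟩ :=
    hS.exists_apply_eq_mul_apply (c := fun v => (‖A (lp.single 2 v 1)‖ : ℂ) ^ 2)
    (fun v => by simpa using pow_le_pow_left₀ (norm_nonneg _) (lp.norm_map_single_le A v) 2)
    (fun u v hu hv huv => by rw [hsib u v hu hv huv]) y
  have hAA : (ContinuousLinearMap.adjoint A * A) (S y) = S z :=
    lp.ext <| funext fun v => by rw [lp.adjoint_mul_self_apply_of_pairwise_orthogonal A hA, hz]
  calc ⟪A (S y), A f⟫_ℂ = ⟪(ContinuousLinearMap.adjoint A * A) (S y), f⟫_ℂ :=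
        (ContinuousLinearMap.adjoint_inner_left A f (A (S y))).symm
    _ = ⟪z, ContinuousLinearMap.adjoint S f⟫_ℂ := by
        rw [hAA, ContinuousLinearMap.adjoint_inner_right]
    _ = 0 := by rw [hf, inner_zero_right]

lemma inner_pow_apply_pow_apply_eq_zero_of_lt (hS : IsShift T lam S)
    {n m : ℕ} (hsib : ∀ u v, u ≠ T.root → v ≠ T.root → T.par u = T.par v →
      ‖(S ^ n) (lp.single 2 u 1)‖ = ‖(S ^ n) (lp.single 2 v 1)‖)
    (hnm : n < m) (x : ℓ²(V)) {f : ℓ²(V)} (hf : ContinuousLinearMap.adjoint S f = 0) :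
    ⟪(S ^ m) x, (S ^ n) f⟫_ℂ = 0 := by
  obtain ⟨k, rfl⟩ := Nat.exists_eq_add_of_lt hnm
  rw [add_assoc, pow_add, pow_succ', mul_apply_eq_comp, mul_apply_eq_comp]
  exact hS.inner_map_apply_map_eq_zero_of_adjoint_eq_zero _
    (hS.pairwise_inner_pow_single_eq_zero n) hsib _ hf

end IsShift

theorem stmt18_general (T : DirTree V) (lam : V → ℝ)
    (S : lp (fun _ : V => ℂ) 2 →L[ℂ] lp (fun _ : V => ℂ) 2) (hS : IsShift T lam S)
    (hbal : ∀ n : ℕ, 1 ≤ n → ∀ u v : V, u ≠ T.root → v ≠ T.root → T.par u = T.par v →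
      ‖(S ^ n) (lp.single 2 u (1:ℂ))‖ = ‖(S ^ n) (lp.single 2 v (1:ℂ))‖) :
    ∀ n m : ℕ, n ≠ m →
      ∀ g ∈ Submodule.map (S ^ n).toLinearMap (LinearMap.ker (ContinuousLinearMap.adjoint S).toLinearMap),
        ∀ h ∈ Submodule.map (S ^ m).toLinearMap (LinearMap.ker (ContinuousLinearMap.adjoint S).toLinearMap),
          (inner ℂ g h : ℂ) = 0 := by
  have hsib : ∀ k u v, u ≠ T.root → v ≠ T.root → T.par u = T.par v →
      ‖(S ^ k) (lp.single 2 u (1:ℂ))‖ = ‖(S ^ k) (lp.single 2 v (1:ℂ))‖ := by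
    rintro (_ | k) u v hu hv huv
    · simp [lp.norm_single]
    · exact hbal (k + 1) k.succ_pos u v hu hv huv
  rintro n m hnm _ ⟨f, hf, rfl⟩ _ ⟨f', hf', rfl⟩
  rcases hnm.lt_or_gt with hlt | hgt
  · exact inner_eq_zero_symm.mp (hS.inner_pow_apply_pow_apply_eq_zero_of_lt (hsib n) hlt f' hf)
  · exact hS.inner_pow_apply_pow_apply_eq_zero_of_lt (hsib m) hgt f hf'

/-- Theorem (iii): if `S_λ` is locally power balanced, then the subspaces
`S_λⁿ(ker S_λ*)` and `S_λᵐ(ker S_λ*)` are mutually orthogonal for all `n ≠ m`. -/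
theorem stmt18 [Countable V] [Infinite V] (T : DirTree V) (lam : V → ℝ)
    (hlam : ∀ v, v ≠ T.root → 0 < lam v)
    (S : lp (fun _ : V => ℂ) 2 →L[ℂ] lp (fun _ : V => ℂ) 2) (hS : IsShift T lam S)
    (hbal : ∀ n : ℕ, 1 ≤ n → ∀ u v : V, u ≠ T.root → v ≠ T.root → T.par u = T.par v →
      ‖(S ^ n) (lp.single 2 u (1:ℂ))‖ = ‖(S ^ n) (lp.single 2 v (1:ℂ))‖) :
    ∀ n m : ℕ, n ≠ m →
      ∀ g ∈ Submodule.map (S ^ n).toLinearMap (LinearMap.ker (ContinuousLinearMap.adjoint S).toLinearMap),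
        ∀ h ∈ Submodule.map (S ^ m).toLinearMap (LinearMap.ker (ContinuousLinearMap.adjoint S).toLinearMap),
          (inner ℂ g h : ℂ) = 0 :=
  stmt18_general T lam S hS hbal
end
end

section
/- If S_λ is injective and the subspaces S_λⁿ(ker S_λ*) and S_λᵐ(ker S_λ*) are mutually orthogonal for all n, m ∈ ℕ₀ with n ≠ m, then S_λ is balanced, i.e., ‖S_λ e_u‖ = ‖S_λ e_v‖ for all u, v ∈ V with |u| = |v|. -/
open Filter Finset Classical

set_option linter.unusedVariables false
open scoped ComplexConjugate ENNReal

noncomputable section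
attribute [local instance] Classical.propDecidable

variable {V : Type*}

/-!
Write `e_x` for the standard basis. The vectors `S^m f` and `f x • S^m e_x` agree on the support
of `S^m e_x`, so `(S^m)* S^m` is diagonal with entries `‖S^m e_x‖²`. If `u`, `v` are siblings with
parent `p`, then `λ_v e_u - λ_u e_v` and `e_root` lie in `ker S*`, and the orthogonality of their
images under `S^m` and `S^(m + |p| + 1)` reads
`λ_u λ_v (S^|p| e_root)(p) (‖S^m e_u‖² - ‖S^m e_v‖²) = 0`; the coefficient is nonzero, so
siblings have the same `‖S^m e_·‖` for every `m`. Consequently `‖S^(m+1) e_p‖ = ‖S^m e_u‖ ‖S e_p‖`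
for every child `u` of `p`, and induction on the depth, for all `m` simultaneously, shows that
`‖S^m e_u‖` depends only on `|u|`.
-/

open scoped lp InnerProductSpace

def IsWanderingSubspace {𝕜 E : Type*} [RCLike 𝕜] [NormedAddCommGroup E] [InnerProductSpace 𝕜 E]
    (S : E →L[𝕜] E) (W : Submodule 𝕜 E) : Prop :=
  ∀ n m : ℕ, n ≠ m → ∀ g ∈ Submodule.map ((S ^ n : E →L[𝕜] E) : E →ₗ[𝕜] E) W,
    ∀ h ∈ Submodule.map ((S ^ m : E →L[𝕜] E) : E →ₗ[𝕜] E) W, ⟪g, h⟫_𝕜 = 0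

theorem adjoint_apply_eq_zero_of_forall_inner {𝕜 E F : Type*} [RCLike 𝕜]
    [NormedAddCommGroup E] [InnerProductSpace 𝕜 E] [CompleteSpace E]
    [NormedAddCommGroup F] [InnerProductSpace 𝕜 F] [CompleteSpace F] (A : E →L[𝕜] F) {g : F}
    (hg : ∀ f, ⟪g, A f⟫_𝕜 = 0) : ContinuousLinearMap.adjoint A g = 0 :=
  ext_inner_right 𝕜 fun f => by rw [ContinuousLinearMap.adjoint_inner_left, hg, inner_zero_left]

section WeightedShift

variable {T : DirTree V} {lam : V → ℝ} {S : ℓ²(V, ℂ) →L[ℂ] ℓ²(V, ℂ)}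

theorem IsShift.par_eq_of_apply_single_ne_zero (hS : IsShift T lam S) {p x : V}
    (hx : S (lp.single 2 p (1 : ℂ)) x ≠ 0) : x ≠ T.root ∧ T.par x = p := by
  rw [hS] at hx
  by_cases hroot : x = T.root
  · simp [hroot] at hx
  refine ⟨hroot, by_contra fun hpar => hx ?_⟩
  rw [if_neg hroot, lp.single_apply_ne 2 p 1 hpar, mul_zero]

theorem IsShift.pow_apply_eq_mul_of_ne_zero (hS : IsShift T lam S) (m : ℕ) (f : ℓ²(V, ℂ))
    {x y : V} (hy : (S ^ m) (lp.single 2 x (1 : ℂ)) y ≠ 0) :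
    (S ^ m) f y = f x * (S ^ m) (lp.single 2 x (1 : ℂ)) y := by
  induction m generalizing y with
  | zero =>
    rcases eq_or_ne y x with rfl | hyx
    · simp
    · rw [pow_zero, one_apply_eq_self, lp.single_apply_ne 2 x 1 hyx] at hy
      exact absurd rfl hy
  | succ m ih =>
    simp only [pow_succ', mul_apply_eq_comp, hS _ y] at hy ⊢
    by_cases hroot : y = T.root
    · simp [hroot] at hy
    simp only [if_neg hroot] at hy ⊢
    rw [ih (right_ne_zero_of_mul hy)]
    ring

theorem IsShift.inner_pow_single_pow (hS : IsShift T lam S) (m : ℕ) (x : V) (f : ℓ²(V, ℂ)) :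
    ⟪(S ^ m) (lp.single 2 x (1 : ℂ)), (S ^ m) f⟫_ℂ
      = f x * (‖(S ^ m) (lp.single 2 x (1 : ℂ))‖ : ℂ) ^ 2 := by
  set a := (S ^ m) (lp.single 2 x (1 : ℂ))
  have hcongr : ⟪a, (S ^ m) f⟫_ℂ = ⟪a, f x • a⟫_ℂ := by
    rw [lp.inner_eq_tsum, lp.inner_eq_tsum]
    refine tsum_congr fun y => ?_
    by_cases hy : a y = 0
    · simp [hy]
    · rw [hS.pow_apply_eq_mul_of_ne_zero m f hy, lp.coeFn_smul, Pi.smul_apply, smul_eq_mul]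
  rw [hcongr, inner_smul_right, inner_self_eq_norm_sq_to_K]
  rfl

theorem IsShift.adjoint_pow_pow_apply (hS : IsShift T lam S) (m : ℕ) (f : ℓ²(V, ℂ)) (x : V) :
    (ContinuousLinearMap.adjoint (S ^ m)) ((S ^ m) f) x
      = f x * (‖(S ^ m) (lp.single 2 x (1 : ℂ))‖ : ℂ) ^ 2 := by
  have hx := lp.inner_single_left (𝕜 := ℂ) (G := fun _ : V => ℂ) x 1
    ((ContinuousLinearMap.adjoint (S ^ m)) ((S ^ m) f))
  rw [ContinuousLinearMap.adjoint_inner_right, hS.inner_pow_single_pow, RCLike.inner_apply,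
    map_one, mul_one] at hx
  exact hx.symm

theorem IsShift.norm_pow_apply_eq_of_forall_norm_pow_single_eq (hS : IsShift T lam S) (m : ℕ)
    (f : ℓ²(V, ℂ)) (γ : ℝ)
    (hγ : ∀ x, f x ≠ 0 → ‖(S ^ m) (lp.single 2 x (1 : ℂ))‖ = γ) :
    ‖(S ^ m) f‖ = |γ| * ‖f‖ := by
  have hdiag : ContinuousLinearMap.adjoint (S ^ m) ((S ^ m) f) = ((γ ^ 2 : ℝ) : ℂ) • f := by
    ext x
    rw [hS.adjoint_pow_pow_apply, lp.coeFn_smul, Pi.smul_apply, smul_eq_mul]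
    by_cases hx : f x = 0
    · simp [hx]
    · rw [hγ x hx]
      push_cast
      ring
  have hsq : ‖(S ^ m) f‖ ^ 2 = (|γ| * ‖f‖) ^ 2 := by
    rw [mul_pow, sq_abs, ← inner_self_eq_norm_sq (𝕜 := ℂ), ← inner_self_eq_norm_sq (𝕜 := ℂ) f,
      ← ContinuousLinearMap.adjoint_inner_right, hdiag, inner_smul_right]
    exact RCLike.re_ofReal_mul (K := ℂ) _ _
  exact (sq_eq_sq₀ (norm_nonneg _) (by positivity)).mp hsq

theorem IsShift.adjoint_single_root_eq_zero (hS : IsShift T lam S) :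
    ContinuousLinearMap.adjoint S (lp.single 2 T.root (1 : ℂ)) = 0 :=
  adjoint_apply_eq_zero_of_forall_inner S fun f => by
    rw [lp.inner_single_left, hS f T.root, if_pos rfl, inner_zero_right]

theorem inner_smul_single_sub_smul_single (u v : V) (a b : ℝ) (h : ℓ²(V, ℂ)) :
    ⟪(a : ℂ) • lp.single 2 u (1 : ℂ) - (b : ℂ) • lp.single 2 v (1 : ℂ), h⟫_ℂ
      = a * h u - b * h v := by
  simp [lp.inner_single_left]

theorem IsShift.adjoint_smul_single_sub_smul_single_eq_zero (hS : IsShift T lam S) {u v : V}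
    (hu : u ≠ T.root) (hv : v ≠ T.root) (hpar : T.par u = T.par v) :
    ContinuousLinearMap.adjoint S
      ((lam v : ℂ) • lp.single 2 u (1 : ℂ) - (lam u : ℂ) • lp.single 2 v (1 : ℂ)) = 0 :=
  adjoint_apply_eq_zero_of_forall_inner S fun f => by
    rw [inner_smul_single_sub_smul_single, hS f u, hS f v, if_neg hu, if_neg hv, hpar]
    ring

theorem IsShift.pow_depth_single_root_apply_ne_zero (hS : IsShift T lam S)
    (hlam : ∀ v, v ≠ T.root → 0 < lam v) (x : V) :
    (S ^ T.depth x) (lp.single 2 T.root (1 : ℂ)) x ≠ 0 := by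
  induction hn : T.depth x generalizing x with
  | zero => simp [(T.depth_eq_zero x).mp hn]
  | succ n ih =>
    have hx : x ≠ T.root := fun h => by simp [(T.depth_eq_zero x).mpr h] at hn
    rw [pow_succ', mul_apply_eq_comp, hS _ x, if_neg hx]
    have := T.depth_par x hx
    exact mul_ne_zero (Complex.ofReal_ne_zero.mpr (hlam x hx).ne') (ih (T.par x) (by omega))

theorem IsShift.apply_single_par (hS : IsShift T lam S) {u : V} (hu : u ≠ T.root) :
    S (lp.single 2 (T.par u) (1 : ℂ)) u = lam u := by
  rw [hS, if_neg hu, lp.single_apply_self, mul_one]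

variable (hlam : ∀ v, v ≠ T.root → 0 < lam v) (hS : IsShift T lam S)
  (hW : IsWanderingSubspace S
    (LinearMap.ker (ContinuousLinearMap.adjoint S : ℓ²(V, ℂ) →ₗ[ℂ] ℓ²(V, ℂ))))
include hlam hS hW

theorem IsShift.norm_pow_single_eq_of_par_eq {u v : V} (hu : u ≠ T.root) (hv : v ≠ T.root)
    (hpar : T.par u = T.par v) (m : ℕ) :
    ‖(S ^ m) (lp.single 2 u (1 : ℂ))‖ = ‖(S ^ m) (lp.single 2 v (1 : ℂ))‖ := by
  have horth := hW m (m + (T.depth (T.par u) + 1)) (by omega) _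
    (Submodule.mem_map_of_mem (hS.adjoint_smul_single_sub_smul_single_eq_zero hu hv hpar)) _
    (Submodule.mem_map_of_mem hS.adjoint_single_root_eq_zero)
  simp only [ContinuousLinearMap.coe_coe] at horth
  rw [pow_add, pow_succ', mul_apply_eq_comp, mul_apply_eq_comp,
    ← ContinuousLinearMap.adjoint_inner_right, inner_smul_single_sub_smul_single,
    hS.adjoint_pow_pow_apply, hS.adjoint_pow_pow_apply, hS _ u, hS _ v, if_neg hu, if_neg hv,
    ← hpar] at horth
  have hG := hS.pow_depth_single_root_apply_ne_zero hlam (T.par u)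
  have hlu : (lam u : ℂ) ≠ 0 := Complex.ofReal_ne_zero.mpr (hlam u hu).ne'
  have hlv : (lam v : ℂ) ≠ 0 := Complex.ofReal_ne_zero.mpr (hlam v hv).ne'
  have hsq : (‖(S ^ m) (lp.single 2 u (1 : ℂ))‖ : ℂ) ^ 2
      = (‖(S ^ m) (lp.single 2 v (1 : ℂ))‖ : ℂ) ^ 2 := by
    apply mul_left_cancel₀ (mul_ne_zero (mul_ne_zero hlu hlv) hG)
    linear_combination horth
  exact (sq_eq_sq₀ (norm_nonneg _) (norm_nonneg _)).mp (by exact_mod_cast hsq)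

theorem IsShift.norm_pow_succ_single_par {u : V} (hu : u ≠ T.root) (m : ℕ) :
    ‖(S ^ (m + 1)) (lp.single 2 (T.par u) (1 : ℂ))‖
      = ‖(S ^ m) (lp.single 2 u (1 : ℂ))‖ * ‖S (lp.single 2 (T.par u) (1 : ℂ))‖ := by
  rw [pow_succ, mul_apply_eq_comp, hS.norm_pow_apply_eq_of_forall_norm_pow_single_eq m _
    ‖(S ^ m) (lp.single 2 u (1 : ℂ))‖ fun x hx => ?_, abs_norm]
  obtain ⟨hx, hpar⟩ := hS.par_eq_of_apply_single_ne_zero hx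
  exact hS.norm_pow_single_eq_of_par_eq hlam hW hx hu hpar m

theorem IsShift.norm_pow_single_eq_of_depth_eq (m : ℕ) {u v : V} (h : T.depth u = T.depth v) :
    ‖(S ^ m) (lp.single 2 u (1 : ℂ))‖ = ‖(S ^ m) (lp.single 2 v (1 : ℂ))‖ := by
  induction hn : T.depth u generalizing u v m with
  | zero => rw [(T.depth_eq_zero u).mp hn, (T.depth_eq_zero v).mp (h ▸ hn)]
  | succ n ih =>
    have hu : u ≠ T.root := fun hu => by have := (T.depth_eq_zero u).mpr hu; omega
    have hv : v ≠ T.root := fun hv => by have := (T.depth_eq_zero v).mpr hv; omega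
    have hdu := T.depth_par u hu
    have hdv := T.depth_par v hv
    have hpar : T.depth (T.par u) = T.depth (T.par v) := by omega
    have hdepth : T.depth (T.par u) = n := by omega
    have hSpar : ‖S (lp.single 2 (T.par u) (1 : ℂ))‖ = ‖S (lp.single 2 (T.par v) (1 : ℂ))‖ := by
      simpa only [pow_one] using ih 1 hpar hdepth
    have hSpar_ne : ‖S (lp.single 2 (T.par u) (1 : ℂ))‖ ≠ 0 := norm_ne_zero_iff.mpr fun h0 =>
      (hlam u hu).ne' (by simpa [h0] using (hS.apply_single_par hu).symm)
    apply mul_right_cancel₀ hSpar_ne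
    calc ‖(S ^ m) (lp.single 2 u (1 : ℂ))‖ * ‖S (lp.single 2 (T.par u) (1 : ℂ))‖
        = ‖(S ^ (m + 1)) (lp.single 2 (T.par u) (1 : ℂ))‖ :=
          (hS.norm_pow_succ_single_par hlam hW hu m).symm
      _ = ‖(S ^ (m + 1)) (lp.single 2 (T.par v) (1 : ℂ))‖ := ih (m + 1) hpar hdepth
      _ = ‖(S ^ m) (lp.single 2 v (1 : ℂ))‖ * ‖S (lp.single 2 (T.par u) (1 : ℂ))‖ := by
          rw [hS.norm_pow_succ_single_par hlam hW hv m, hSpar]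

end WeightedShift

theorem stmt19_general (T : DirTree V) (lam : V → ℝ)
    (hlam : ∀ v, v ≠ T.root → 0 < lam v)
    (S : lp (fun _ : V => ℂ) 2 →L[ℂ] lp (fun _ : V => ℂ) 2) (hS : IsShift T lam S)
    (horth : ∀ n m : ℕ, n ≠ m →
      ∀ g ∈ Submodule.map ((S ^ n : _ →L[ℂ] _) : lp (fun _ : V => ℂ) 2 →ₗ[ℂ] lp (fun _ : V => ℂ) 2) (LinearMap.ker (ContinuousLinearMap.adjoint S : lp (fun _ : V => ℂ) 2 →ₗ[ℂ] lp (fun _ : V => ℂ) 2)),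
        ∀ h ∈ Submodule.map ((S ^ m : _ →L[ℂ] _) : lp (fun _ : V => ℂ) 2 →ₗ[ℂ] lp (fun _ : V => ℂ) 2) (LinearMap.ker (ContinuousLinearMap.adjoint S : lp (fun _ : V => ℂ) 2 →ₗ[ℂ] lp (fun _ : V => ℂ) 2)),
          (inner ℂ g h : ℂ) = 0) :
    ∀ u v : V, T.depth u = T.depth v →
      ‖S (lp.single 2 u (1:ℂ))‖ = ‖S (lp.single 2 v (1:ℂ))‖ := fun u v h => by
  simpa only [pow_one] using hS.norm_pow_single_eq_of_depth_eq hlam horth 1 h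

/-- Theorem (iv): if `S_λ` is injective and the subspaces
`S_λⁿ(ker S_λ*)`, `n ∈ ℕ₀`, are mutually orthogonal, then `S_λ` is balanced. -/
theorem stmt19 [Countable V] [Infinite V] (T : DirTree V) (lam : V → ℝ)
    (hlam : ∀ v, v ≠ T.root → 0 < lam v)
    (S : lp (fun _ : V => ℂ) 2 →L[ℂ] lp (fun _ : V => ℂ) 2) (hS : IsShift T lam S)
    (hinj : Function.Injective S)
    (horth : ∀ n m : ℕ, n ≠ m →
      ∀ g ∈ Submodule.map ((S ^ n : _ →L[ℂ] _) : lp (fun _ : V => ℂ) 2 →ₗ[ℂ] lp (fun _ : V => ℂ) 2) (LinearMap.ker (ContinuousLinearMap.adjoint S : lp (fun _ : V => ℂ) 2 →ₗ[ℂ] lp (fun _ : V => ℂ) 2)),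
        ∀ h ∈ Submodule.map ((S ^ m : _ →L[ℂ] _) : lp (fun _ : V => ℂ) 2 →ₗ[ℂ] lp (fun _ : V => ℂ) 2) (LinearMap.ker (ContinuousLinearMap.adjoint S : lp (fun _ : V => ℂ) 2 →ₗ[ℂ] lp (fun _ : V => ℂ) 2)),
          (inner ℂ g h : ℂ) = 0) :
    ∀ u v : V, T.depth u = T.depth v →
      ‖S (lp.single 2 u (1:ℂ))‖ = ‖S (lp.single 2 v (1:ℂ))‖ :=
  stmt19_general T lam hlam S hS horth
end
end
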